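/- Lumpable bisimilarity ≈_l, defined as the union of all lumpable bisimulations over PEPA components, is itself the largest symmetric lumpable bisimulation over PEPA components. -/
import Mathlib


open scoped ENNReal Classical

/-- Action types: a countable set with a distinguished silent type `tau`. -/
inductive Act : Type where
  | tau : Act
  | vis : ℕ → Act
deriving DecidableEq

/-- PEPA components: prefix `(α,r).P`, choice `P+Q`, cooperation `P ⊲⊳_L Q`,
hiding `P/L`, and constants `A` (given by an environment of defining equations).
Rates live in `ℝ≥0∞` (positive reals together with the unspecified symbol `⊤`). -/
inductive Proc : Type where
  | pre : Act → ℝ≥0∞ → Proc → Proc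
  | choice : Proc → Proc → Proc
  | coop : Proc → Set Act → Proc → Proc
  | hide : Proc → Set Act → Proc
  | const : ℕ → Proc

namespace PEPA

/-- Fuelled conditional transition rate `qF E n P α P'`: the total rate
(with multiplicities) of the `α`-transitions from `P` to `P'` in the
multi-transition system given by the operational semantics of Table 1,
computed with `n` units of fuel for unfolding constants.
The shared-activity (cooperation) rule uses the apparent rates
`r_α(P) = ∑' X, qF E n P α X` as in
`R = (r₁/r_α(P)) · (r₂/r_α(Q)) · min(r_α(P), r_α(Q))`. -/
noncomputable def qF (E : ℕ → Proc) : ℕ → Proc → Act → Proc → ℝ≥0∞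
  | 0, _, _, _ => 0
  | n+1, .pre β r P, α, X => if β = α ∧ X = P then r else 0
  | n+1, .choice P Q, α, X => qF E n P α X + qF E n Q α X
  | n+1, .hide P L, α, X =>
      match X with
      | .hide P' L' =>
          if L' = L then
            if α = .tau then qF E n P .tau P' + ∑' β : L, qF E n P β P'
            else if α ∈ L then 0 else qF E n P α P'
          else 0
      | _ => 0
  | n+1, .coop P L Q, α, X =>
      match X with
      | .coop P' L' Q' =>
          if L' = L then
            if α ∈ L then
              (qF E n P α P' / ∑' Y, qF E n P α Y) * (qF E n Q α Q' / ∑' Y, qF E n Q α Y)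
                * min (∑' Y, qF E n P α Y) (∑' Y, qF E n Q α Y)
            else
              (if Q' = Q then qF E n P α P' else 0) + (if P' = P then qF E n Q α Q' else 0)
          else 0
      | _ => 0
  | n+1, .const c, α, X => qF E n (E c) α X

/-- `q E P α P'` : the (total) conditional transition rate from `P` to `P'`
via action type `α`, i.e. the sum of the rates over all transitions
`P --(α,r)--> P'` of the multi-transition system. -/
noncomputable def q (E : ℕ → Proc) (P : Proc) (α : Act) (P' : Proc) : ℝ≥0∞ :=
  ⨆ n, qF E n P α P'

/-- Total conditional transition rate `q[P,S,α] = Σ_{P'∈S} q(P,P',α)`. -/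
noncomputable def qTo (E : ℕ → Proc) (P : Proc) (S : Set Proc) (α : Act) : ℝ≥0∞ :=
  ∑' P' : S, q E P α P'

/-- One step of the derivation graph: `P` has some transition to `P'`. -/
def Step (E : ℕ → Proc) (P P' : Proc) : Prop := ∃ α, q E P α P' ≠ 0

/-- The derivative set `ds(P)`: the set of states reachable from `P`. -/
def ds (E : ℕ → Proc) (P : Proc) : Set Proc :=
  {P' | Relation.ReflTransGen (Step E) P P'}

/-- `𝒜(P)`: the set of current action types of `P`. -/
def curTypes (E : ℕ → Proc) (P : Proc) : Set Act :=
  {α | ∃ P', q E P α P' ≠ 0}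

/-- The set of equivalence classes `𝒞/ℛ` of a relation `ℛ`. -/
def eqCls (R : Proc → Proc → Prop) : Set (Set Proc) :=
  {S | ∃ P, S = {Q | R P Q}}

/-- A lumpable bisimulation: an equivalence relation `R` such that whenever
`R P Q`, then for all `α` and all classes `S` of `R` with either `α ≠ τ`, or
`α = τ` and `P,Q ∉ S`, it holds that `q[P,S,α] = q[Q,S,α]`. -/
def IsLumpBisim (E : ℕ → Proc) (R : Proc → Proc → Prop) : Prop :=
  Equivalence R ∧
    ∀ P Q, R P Q → ∀ α, ∀ S ∈ eqCls R,
      (α ≠ Act.tau ∨ (P ∉ S ∧ Q ∉ S)) → qTo E P S α = qTo E Q S α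

/-- Lumpable bisimilarity `≈_l`: the union of all lumpable bisimulations. -/
def lb (E : ℕ → Proc) (P Q : Proc) : Prop :=
  ∃ R, IsLumpBisim E R ∧ R P Q

section High

-- `Hs` is the set `ℋ` of high action types (the remaining visible types are low).
variable (E : ℕ → Proc) (Hs : Set Act)

/-- A high level component: every derivative may next engage in high types only. -/
def IsHighComp (Hc : Proc) : Prop := ∀ H' ∈ ds E Hc, curTypes E H' ⊆ Hs

/-- The set `ℒ` of low action types. -/
def Low : Set Act := {α | α ∉ Hs ∧ α ≠ Act.tau}

/-- An inert component: a high level component performing no activity at all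
(hence sharing no action type with any component). -/
def inert : Proc := .pre .tau 0 (.const 0)

/-- `P \ ℋ` : `P ⊲⊳_ℋ H̄` where `H̄` is a high level component that does not
cooperate with `P` (it shares no action types with the derivatives of `P`). -/
def restr (P : Proc) : Proc := .coop P Hs inert

/-- The high context `C[_] = (_ ⊲⊳_ℋ Hc)/ℋ` applied to `P`. -/
def hctx (Hc P : Proc) : Proc := .hide (.coop P Hs Hc) Hs

/-- Stochastic Non-Interference: `P\ℋ ≈_l (P ⊲⊳_ℋ H)/ℋ` for every high `H`. -/
def SNI (P : Proc) : Prop :=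
  ∀ Hc, IsHighComp E Hs Hc → lb E (restr Hs P) (hctx Hs Hc P)

/-- Persistent Stochastic Non-Interference: every derivative of `P` satisfies SNI. -/
def PSNI (P : Proc) : Prop := ∀ P' ∈ ds E P, SNI E Hs P'

/-- `q_C(P,P',α)`: the sum of the rates over all transitions
`C[P] --(α,r)--> C'[P']` (with `C'[_]` ranging over high contexts). -/
noncomputable def qC (Hc P : Proc) (α : Act) (P' : Proc) : ℝ≥0∞ :=
  ∑' Hc' : Proc, q E (hctx Hs Hc P) α (hctx Hs Hc' P')

/-- `q_C[P,S,α] = Σ_{P'∈S} q_C(P,P',α)`. -/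
noncomputable def qCTo (Hc P : Proc) (S : Set Proc) (α : Act) : ℝ≥0∞ :=
  ∑' P' : S, qC E Hs Hc P α P'

/-- A lumpable bisimulation on high contexts. -/
def IsLumpBisimHC (R : Proc → Proc → Prop) : Prop :=
  Equivalence R ∧
    ∀ P Q, R P Q → ∀ Hc, IsHighComp E Hs Hc → ∀ α, ∀ S ∈ eqCls R,
      (α ≠ Act.tau ∨ (P ∉ S ∧ Q ∉ S)) →
        qCTo E Hs Hc P S α = qCTo E Hs Hc Q S α

/-- Lumpable bisimilarity on high contexts `≈_l^hc`. -/
def lbhc (P Q : Proc) : Prop := ∃ R, IsLumpBisimHC E Hs R ∧ R P Q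

/-- A lumpable bisimulation up to `ℋ`. -/
def IsLumpBisimUpto (R : Proc → Proc → Prop) : Prop :=
  Equivalence R ∧
    ∀ P Q, R P Q → ∀ α, ∀ S ∈ eqCls R,
      ((α ∉ Hs ∧ α ≠ Act.tau) → qTo E P S α = qTo E Q S α) ∧
      ((α ∈ Hs ∨ α = Act.tau) → P ∉ S → Q ∉ S → qTo E P S α = qTo E Q S α)

/-- Lumpable bisimilarity up to `ℋ`, written `≈_l^ℋ`. -/
def lbUpto (P Q : Proc) : Prop := ∃ R, IsLumpBisimUpto E Hs R ∧ R P Q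

end High

end PEPA

namespace PEPA

/-- Key lemma: a lumpable bisimulation transfers total rates to any saturated set. -/
lemma qTo_congr_saturated (E : ℕ → Proc) {R : Proc → Proc → Prop}
    (hR : IsLumpBisim E R) {P Q : Proc} (hPQ : R P Q) {S : Set Proc}
    (hsat : ∀ x ∈ S, ∀ y, R x y → y ∈ S) (α : Act)
    (hc : α ≠ Act.tau ∨ (P ∉ S ∧ Q ∉ S)) :
    qTo E P S α = qTo E Q S α := by
  classical
  let s : Setoid Proc := ⟨R, hR.1⟩
  have part : ∀ g : Proc → ℝ≥0∞,
      ∑' x : S, g x =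
        ∑' c : Quotient s, ∑' x : {y : S // Quotient.mk s y.1 = c}, g x.1.1 := by
    intro g
    rw [← ENNReal.tsum_sigma]
    exact ((Equiv.sigmaFiberEquiv fun x : S => Quotient.mk s x.1).tsum_eq
      (fun x : S => g x.1)).symm
  show (∑' x : S, q E P α x) = ∑' x : S, q E Q α x
  rw [part (q E P α), part (q E Q α)]
  refine tsum_congr fun c => ?_
  by_cases hc' : ∃ x, x ∈ S ∧ Quotient.mk s x = c
  · obtain ⟨x, hxS, hxc⟩ := hc'
    -- fiber ≃ class of x
    let e : {y : Proc // R x y} ≃ {y : S // Quotient.mk s y.1 = c} :=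
      { toFun := fun y => ⟨⟨y.1, hsat x hxS y.1 y.2⟩, by
          rw [← hxc]; exact Quotient.sound (hR.1.symm y.2)⟩
        invFun := fun z => ⟨z.1.1, hR.1.symm (Quotient.exact (z.2.trans hxc.symm))⟩
        left_inv := fun y => rfl
        right_inv := fun z => by ext; rfl }
    have hcls : {y : Proc | R x y} ∈ eqCls R := ⟨x, rfl⟩
    have hsub : {y : Proc | R x y} ⊆ S := fun y hy => hsat x hxS y hy
    have hcond : α ≠ Act.tau ∨ (P ∉ {y : Proc | R x y} ∧ Q ∉ {y : Proc | R x y}) := by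
      rcases hc with h | ⟨h1, h2⟩
      · exact Or.inl h
      · exact Or.inr ⟨fun h => h1 (hsub h), fun h => h2 (hsub h)⟩
    have key : qTo E P {y : Proc | R x y} α = qTo E Q {y : Proc | R x y} α :=
      hR.2 P Q hPQ α _ hcls hcond
    have eP : (∑' z : {y : S // Quotient.mk s y.1 = c}, q E P α z.1.1)
        = ∑' y : {y : Proc // R x y}, q E P α y.1 := by
      rw [← e.tsum_eq (fun z : {y : S // Quotient.mk s y.1 = c} => q E P α z.1.1)]
      exact tsum_congr fun y => rfl
    have eQ : (∑' z : {y : S // Quotient.mk s y.1 = c}, q E Q α z.1.1)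
        = ∑' y : {y : Proc // R x y}, q E Q α y.1 := by
      rw [← e.tsum_eq (fun z : {y : S // Quotient.mk s y.1 = c} => q E Q α z.1.1)]
      exact tsum_congr fun y => rfl
    rw [eP, eQ]; exact key
  · exact tsum_congr fun z => absurd ⟨z.1.1, z.1.2, z.2⟩ hc'

/-- Equality is a lumpable bisimulation. -/
lemma eq_isLumpBisim (E : ℕ → Proc) : IsLumpBisim E Eq :=
  ⟨eq_equivalence, fun P Q h _ _ _ _ => by subst h; rfl⟩

/-- The equivalence closure of the union of two lumpable bisimulations is one. -/
lemma join_isLumpBisim (E : ℕ → Proc) {R1 R2 : Proc → Proc → Prop}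
    (h1 : IsLumpBisim E R1) (h2 : IsLumpBisim E R2) :
    IsLumpBisim E (Relation.EqvGen fun a b => R1 a b ∨ R2 a b) := by
  set r : Proc → Proc → Prop := fun a b => R1 a b ∨ R2 a b with hr
  set J := Relation.EqvGen r with hJ
  have hJequiv : Equivalence J := Relation.EqvGen.is_equivalence r
  refine ⟨hJequiv, ?_⟩
  intro P Q hPQ
  induction hPQ with
  | rel x y h =>
    intro α S hS hc
    obtain ⟨P0, rfl⟩ := hS
    have hsat1 : ∀ a ∈ {Z | J P0 Z}, ∀ b, R1 a b → b ∈ {Z | J P0 Z} :=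
      fun a ha b hab => hJequiv.trans ha (Relation.EqvGen.rel a b (Or.inl hab))
    have hsat2 : ∀ a ∈ {Z | J P0 Z}, ∀ b, R2 a b → b ∈ {Z | J P0 Z} :=
      fun a ha b hab => hJequiv.trans ha (Relation.EqvGen.rel a b (Or.inr hab))
    rcases h with h | h
    · exact qTo_congr_saturated E h1 h hsat1 α hc
    · exact qTo_congr_saturated E h2 h hsat2 α hc
  | refl x => intro α S hS hc; rfl
  | symm x y _ ih =>
    intro α S hS hc
    exact (ih α S hS (by tauto)).symm
  | trans x y z hxy hyz ih1 ih2 =>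
    intro α S hS hc
    have hy : α ≠ Act.tau ∨ (y ∉ S) := by
      rcases hc with h | ⟨hx, hz⟩
      · exact Or.inl h
      · refine Or.inr fun hyS => hx ?_
        obtain ⟨P0, rfl⟩ := hS
        exact hJequiv.trans hyS (hJequiv.symm hxy)
    rcases hy with h | hyS
    · exact (ih1 α S hS (Or.inl h)).trans (ih2 α S hS (Or.inl h))
    · rcases hc with h | ⟨hx, hz⟩
      · exact (ih1 α S hS (Or.inl h)).trans (ih2 α S hS (Or.inl h))
      · exact (ih1 α S hS (Or.inr ⟨hx, hyS⟩)).trans (ih2 α S hS (Or.inr ⟨hyS, hz⟩))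

lemma lb_equivalence (E : ℕ → Proc) : Equivalence (lb E) := by
  constructor
  · exact fun P => ⟨Eq, eq_isLumpBisim E, rfl⟩
  · rintro P Q ⟨R, hR, h⟩; exact ⟨R, hR, hR.1.symm h⟩
  · rintro P Q S ⟨R1, hR1, h1⟩ ⟨R2, hR2, h2⟩
    exact ⟨_, join_isLumpBisim E hR1 hR2,
      (Relation.EqvGen.rel P Q (Or.inl h1)).trans _ _ _
        (Relation.EqvGen.rel Q S (Or.inr h2))⟩

lemma lb_isLumpBisim (E : ℕ → Proc) : IsLumpBisim E (lb E) := by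
  refine ⟨lb_equivalence E, ?_⟩
  rintro P Q ⟨R, hR, hPQ⟩ α S hS hc
  obtain ⟨P0, rfl⟩ := hS
  have hsat : ∀ a ∈ {Z | lb E P0 Z}, ∀ b, R a b → b ∈ {Z | lb E P0 Z} :=
    fun a ha b hab => (lb_equivalence E).trans ha ⟨R, hR, hab⟩
  exact qTo_congr_saturated E hR hPQ hsat α hc

end PEPA

open PEPA

/-- Lumpable bisimilarity `≈_l` is itself the largest symmetric
lumpable bisimulation over PEPA components. -/
theorem lb_largest_symmetric_lumpBisim (E : ℕ → Proc) :
    IsLumpBisim E (lb E) ∧ Symmetric (lb E) ∧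
      ∀ R : Proc → Proc → Prop, IsLumpBisim E R → Symmetric R →
        ∀ P Q, R P Q → lb E P Q := by
  exact ⟨lb_isLumpBisim E, fun P Q h => (lb_equivalence E).symm h,
    fun R hR _ P Q hPQ => ⟨R, hR, hPQ⟩⟩
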